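/- Let G be a compact Hausdorff second-countable topological group with Haar probability measure μ_G, and let V be a finite-dimensional real normed vector space on which G acts so that each element g acts as a linear map and the action map G × V → V is jointly continuous. Let P ⊆ V be a nonempty compact set with g•ψ ∈ P for every g ∈ G and ψ ∈ P, and suppose G acts transitively on P (for all ψ, ψ′ ∈ P there exists g ∈ G with g•ψ = ψ′). Then: (i) the barycenter χ_ψ = ∫_G g•ψ dμ_G(g) is the same element χ of V for every ψ ∈ P; and (ii) for every ρ in the convex hull of P there exist p ∈ (0,1] and σ in the convex hull of P such that χ = p·ρ + (1−p)·σ. -/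

import Mathlib

/-!
Right invariance of the Haar probability measure and transitivity make the barycenter
`∫ g • ψ ∂μ` independent of `ψ ∈ P`; by linearity it is then the same `χ` for every point of
`K = convexHull ℝ P`.

For internality, call `x` internal in `K` when every segment from a point of `K` through `x`
extends a little beyond `x` inside `K`; such an extension `σ` gives the decomposition
`x = p • ρ + (1 - p) • σ`. Internal points form a convex set which every `g` preserves, and in
finite dimension any point of the relative interior of `K` is one. Taking such a `z`, the
barycenter `χ = ∫ g • z ∂μ` lies in the convex hull of the compact orbit of `z` (closed by
Carathéodory), hence is internal.
-/

open MeasureTheory Set Filter Topology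

theorem isCompact_convexHull {E : Type*} [NormedAddCommGroup E] [NormedSpace ℝ E]
    [FiniteDimensional ℝ E] {s : Set E} (hs : IsCompact s) : IsCompact (convexHull ℝ s) := by
  let combo (k : ℕ) (wz : (Fin k → ℝ) × (Fin k → E)) : E := ∑ i, wz.1 i • wz.2 i
  have hcombo : convexHull ℝ s = ⋃ k ∈ Finset.range (Module.finrank ℝ E + 2),
      combo k '' (stdSimplex ℝ (Fin k) ×ˢ univ.pi fun _ => s) := by
    refine subset_antisymm (fun x hx => ?_) ?_
    · obtain ⟨ι, _, z, w, hzs, hz, hw₀, hw₁, rfl⟩ := eq_pos_convex_span_of_mem_convexHull hx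
      have hcard : Fintype.card ι < Module.finrank ℝ E + 2 :=
        Nat.lt_succ_of_le (hz.card_le_finrank_succ.trans (by gcongr; exact Submodule.finrank_le _))
      let e := Fintype.equivFin ι
      refine mem_biUnion (Finset.mem_range.2 hcard) ⟨(w ∘ e.symm, z ∘ e.symm), ⟨⟨?_, ?_⟩, ?_⟩, ?_⟩
      · exact fun i => (hw₀ _).le
      · simpa [e.symm.sum_comp] using hw₁
      · exact fun i _ => hzs (mem_range_self _)
      · exact e.symm.sum_comp fun i => w i • z i
    · refine iUnion₂_subset fun k _ => ?_
      rintro _ ⟨⟨w, z⟩, ⟨hw, hz⟩, rfl⟩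
      exact (convex_convexHull ℝ s).sum_mem (fun i _ => hw.1 i) hw.2
        fun i _ => subset_convexHull ℝ s (hz i trivial)
  rw [hcombo]
  refine (Finset.range _).isCompact_biUnion fun k _ => ?_
  exact ((isCompact_stdSimplex ℝ _).prod (isCompact_univ_pi fun _ => hs)).image <|
    continuous_finsetSum _ fun i _ =>
      ((continuous_apply i).comp continuous_fst).smul ((continuous_apply i).comp continuous_snd)

lemma IsCompact.integral_mem_convexHull {α E : Type*} [MeasurableSpace α]
    [NormedAddCommGroup E] [NormedSpace ℝ E] [FiniteDimensional ℝ E]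
    {μ : Measure α} [IsProbabilityMeasure μ] {s : Set E} (hs : IsCompact s) {f : α → E}
    (hfs : ∀ᵐ x ∂μ, f x ∈ s) (hfi : Integrable f μ) : ∫ x, f x ∂μ ∈ convexHull ℝ s :=
  (convex_convexHull ℝ s).integral_mem (isCompact_convexHull hs).isClosed
    (hfs.mono fun _ hx => subset_convexHull ℝ s hx) hfi

lemma isMulRightInvariant_of_isProbabilityMeasure {G : Type*} [Group G] [TopologicalSpace G]
    [IsTopologicalGroup G] [LocallyCompactSpace G] [MeasurableSpace G] [BorelSpace G]
    (μ : Measure G) [μ.IsHaarMeasure] [IsProbabilityMeasure μ] : μ.IsMulRightInvariant := by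
  refine ⟨fun g => ?_⟩
  have : IsProbabilityMeasure (μ.map (· * g)) :=
    Measure.isProbabilityMeasure_map (measurable_mul_const g).aemeasurable
  exact Measure.isHaarMeasure_eq_of_isProbabilityMeasure _ μ

section InternalPoint

variable {V : Type*} [AddCommGroup V] [Module ℝ V] {K : Set V} {x : V}

def IsInternalPoint (K : Set V) (x : V) : Prop :=
  ∀ y ∈ K, ∀ᶠ t in 𝓝[>] (0 : ℝ), x + t • (x - y) ∈ K

lemma IsInternalPoint.exists_eq_smul_add_smul (hx : IsInternalPoint K x) {y : V} (hy : y ∈ K) :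
    ∃ p : ℝ, 0 < p ∧ p ≤ 1 ∧ ∃ σ ∈ K, x = p • y + (1 - p) • σ := by
  obtain ⟨t, hσ, ht : 0 < t⟩ := ((hx y hy).and self_mem_nhdsWithin).exists
  refine ⟨t / (1 + t), by positivity, (div_le_one (by positivity)).2 (by linarith), _, hσ, ?_⟩
  match_scalars <;> field_simp <;> ring

lemma Convex.convex_setOf_isInternalPoint (hK : Convex ℝ K) :
    Convex ℝ {x | IsInternalPoint K x} := by
  intro x₁ hx₁ x₂ hx₂ a b ha hb hab y hy
  filter_upwards [hx₁ y hy, hx₂ y hy] with t h₁ h₂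
  obtain rfl : b = 1 - a := by linarith
  convert hK h₁ h₂ ha hb hab using 1
  match_scalars <;> ring

lemma IsInternalPoint.map {f : V → V} (hf : IsLinearMap ℝ f) (hmaps : MapsTo f K K)
    (hsurj : SurjOn f K K) (hx : IsInternalPoint K x) : IsInternalPoint K (f x) := by
  intro y hy
  obtain ⟨y', hy', rfl⟩ := hsurj hy
  filter_upwards [hx y' hy'] with t ht
  simpa only [hf.map_add, hf.map_smul, hf.map_sub] using hmaps ht

end InternalPoint

lemma isInternalPoint_of_mem_intrinsicInterior {V : Type*} [NormedAddCommGroup V]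
    [NormedSpace ℝ V] {K : Set V} {x : V} (hx : x ∈ intrinsicInterior ℝ K) :
    IsInternalPoint K x := by
  obtain ⟨x', hx', rfl⟩ := hx
  intro y hy
  let ray (t : ℝ) : affineSpan ℝ K :=
    ⟨x' + t • ((x' : V) - y), by
      simpa [vsub_eq_sub, vadd_eq_add, add_comm] using
        AffineSubspace.smul_vsub_vadd_mem _ t x'.2 (subset_affineSpan ℝ K hy) x'.2⟩
  have hray : Continuous ray := by fun_prop
  have hlim : Tendsto ray (𝓝[>] 0) (𝓝 x') := by
    simpa [ray] using (hray.tendsto 0).mono_left nhdsWithin_le_nhds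
  exact hlim (mem_interior_iff_mem_nhds.1 hx')

section Action

variable {G V : Type*} [Group G] [NormedAddCommGroup V] [NormedSpace ℝ V] [MulAction G V]

lemma mapsTo_smul_convexHull (hlin : ∀ g : G, IsLinearMap ℝ (fun v : V => g • v)) {P : Set V}
    (hP : ∀ g : G, ∀ ψ ∈ P, g • ψ ∈ P) (g : G) :
    MapsTo (g • ·) (convexHull ℝ P) (convexHull ℝ P) := by
  rw [mapsTo_iff_image_subset, (hlin g).image_convexHull P]
  exact convexHull_mono (image_subset_iff.2 (hP g))

variable [MeasurableSpace G] (μ : Measure G)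

lemma isLinearMap_integral_smul (hlin : ∀ g : G, IsLinearMap ℝ (fun v : V => g • v))
    (hint : ∀ x : V, Integrable (fun g : G => g • x) μ) :
    IsLinearMap ℝ fun x : V => ∫ g, g • x ∂μ where
  map_add x y := by
    simp_rw [(hlin _).map_add]
    exact integral_add (hint x) (hint y)
  map_smul c x := by
    simp_rw [(hlin _).map_smul]
    exact integral_smul c _

lemma integral_smul_eq_of_mem_convexHull (hlin : ∀ g : G, IsLinearMap ℝ (fun v : V => g • v))
    (hint : ∀ x : V, Integrable (fun g : G => g • x) μ) {P : Set V} {χ : V}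
    (hP : ∀ ψ ∈ P, ∫ g, g • ψ ∂μ = χ) {x : V} (hx : x ∈ convexHull ℝ P) :
    ∫ g, g • x ∂μ = χ := by
  have hmem := (isLinearMap_integral_smul μ hlin hint).image_convexHull P ▸ mem_image_of_mem _ hx
  have hsub : (fun x => ∫ g, g • x ∂μ) '' P ⊆ {χ} := image_subset_iff.2 fun ψ hψ => hP ψ hψ
  simpa using convexHull_mono hsub hmem

lemma IsInternalPoint.integral_smul [TopologicalSpace G] [CompactSpace G] [IsProbabilityMeasure μ]
    [FiniteDimensional ℝ V] (hlin : ∀ g : G, IsLinearMap ℝ (fun v : V => g • v)) {K : Set V}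
    (hK : Convex ℝ K) (hKinv : ∀ g : G, MapsTo (g • ·) K K) {z : V} (hz : IsInternalPoint K z)
    (hcont : Continuous fun g : G => g • z) (hint : Integrable (fun g : G => g • z) μ) :
    IsInternalPoint K (∫ g, g • z ∂μ) := by
  have horbit (g : G) : IsInternalPoint K (g • z) :=
    hz.map (hlin g) (hKinv g) fun y hy => ⟨g⁻¹ • y, hKinv g⁻¹ hy, smul_inv_smul g y⟩
  exact convexHull_min (range_subset_iff.2 horbit) hK.convex_setOf_isInternalPoint <|
    (isCompact_range hcont).integral_mem_convexHull (.of_forall mem_range_self) hint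

end Action

theorem unique_invariant_state_of_transitive_and_internal_general
    {G V : Type*} [Group G] [TopologicalSpace G] [IsTopologicalGroup G]
    [CompactSpace G]
    [MeasurableSpace G] [BorelSpace G]
    (μ : Measure G) [μ.IsHaarMeasure] [IsProbabilityMeasure μ]
    [NormedAddCommGroup V] [NormedSpace ℝ V] [FiniteDimensional ℝ V]
    [MulAction G V]
    (hlin : ∀ g : G, IsLinearMap ℝ (fun v : V => g • v))
    (hcont : Continuous fun gv : G × V => gv.1 • gv.2)
    (P : Set V) (hPne : P.Nonempty)
    (hPinv : ∀ g : G, ∀ ψ ∈ P, g • ψ ∈ P)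
    (htrans : ∀ ψ ∈ P, ∀ ψ' ∈ P, ∃ g : G, g • ψ = ψ') :
    (∀ ψ ∈ P, ∀ ψ' ∈ P, (∫ g, g • ψ ∂μ) = ∫ g, g • ψ' ∂μ) ∧
    (∀ ψ ∈ P, ∀ ρ ∈ convexHull ℝ P, ∃ p : ℝ, 0 < p ∧ p ≤ 1 ∧
      ∃ σ ∈ convexHull ℝ P, (∫ g, g • ψ ∂μ) = p • ρ + (1 - p) • σ) := by
  have := isMulRightInvariant_of_isProbabilityMeasure μ
  have horbit (x : V) : Continuous fun g : G => g • x := hcont.comp (.prodMk_left x)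
  have hint (x : V) : Integrable (fun g : G => g • x) μ :=
    (horbit x).integrable_of_hasCompactSupport (.of_compactSpace _)
  have hbary : ∀ ψ ∈ P, ∀ ψ' ∈ P, (∫ g, g • ψ ∂μ) = ∫ g, g • ψ' ∂μ := by
    intro ψ hψ ψ' hψ'
    obtain ⟨g₀, rfl⟩ := htrans ψ hψ ψ' hψ'
    simp_rw [smul_smul]
    exact (integral_mul_right_eq_self (fun g => g • ψ) g₀).symm
  refine ⟨hbary, fun ψ hψ ρ hρ => ?_⟩
  obtain ⟨z, hz⟩ := (hPne.mono (subset_convexHull ℝ P)).intrinsicInterior (convex_convexHull ℝ P)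
  rw [← integral_smul_eq_of_mem_convexHull μ hlin hint (fun ψ' hψ' => hbary ψ' hψ' ψ hψ)
    (intrinsicInterior_subset hz)]
  exact (isInternalPoint_of_mem_intrinsicInterior hz).integral_smul μ hlin (convex_convexHull ℝ P)
    (mapsTo_smul_convexHull hlin hPinv) (horbit z) (hint z) |>.exists_eq_smul_add_smul hρ

/-- In a causal theory where the compact group of reversible channels acts transitively on
the compact set `P` of normalised pure states, the Haar average of any pure state is one and
the same invariant state `χ`, and `χ` is internal: every state `ρ` (element of the convex
hull of `P`) appears in some convex decomposition `χ = p • ρ + (1 − p) • σ` with `p > 0`. -/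
theorem unique_invariant_state_of_transitive_and_internal
    {G V : Type*} [Group G] [TopologicalSpace G] [IsTopologicalGroup G]
    [CompactSpace G] [T2Space G] [SecondCountableTopology G]
    [MeasurableSpace G] [BorelSpace G]
    (μ : Measure G) [μ.IsHaarMeasure] [IsProbabilityMeasure μ]
    [NormedAddCommGroup V] [NormedSpace ℝ V] [FiniteDimensional ℝ V]
    [MulAction G V]
    (hlin : ∀ g : G, IsLinearMap ℝ (fun v : V => g • v))
    (hcont : Continuous fun gv : G × V => gv.1 • gv.2)
    (P : Set V) (hPne : P.Nonempty) (hPcomp : IsCompact P)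
    (hPinv : ∀ g : G, ∀ ψ ∈ P, g • ψ ∈ P)
    (htrans : ∀ ψ ∈ P, ∀ ψ' ∈ P, ∃ g : G, g • ψ = ψ') :
    (∀ ψ ∈ P, ∀ ψ' ∈ P, (∫ g, g • ψ ∂μ) = ∫ g, g • ψ' ∂μ) ∧
    (∀ ψ ∈ P, ∀ ρ ∈ convexHull ℝ P, ∃ p : ℝ, 0 < p ∧ p ≤ 1 ∧
      ∃ σ ∈ convexHull ℝ P, (∫ g, g • ψ ∂μ) = p • ρ + (1 - p) • σ) :=
  unique_invariant_state_of_transitive_and_internal_general μ hlin hcont P hPne hPinv htrans
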